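/- arXiv:1508.04074 — 2 statements merged into one kernel-verified Lean document; each statement's English description precedes it below -/
import Mathlib

section
/- Let 1 ≤ p < q < ∞. Then for every ε > 0 there exists a finite rank positive bounded linear operator T : ℓ_p → ℓ_q which is ε-disjointness preserving, satisfies ‖T‖ ≤ 2^{1 − 1/q}, and such that ‖T − S‖ ≥ 2^{-1/q} for every disjointness preserving linear operator S : ℓ_p → ℓ_q. -/
/-!
The operator `T = gridOp` spreads the first `2k` unit vectors, scaled by `κ = k^{-1/q}`, over the
rows and columns of a `k × k` grid. Every grid point lies on one row and one column, so convexity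
of `t ↦ t^q` gives `‖T‖ ≤ 2^{1-1/q}`. For disjoint `x, y` only cross terms survive:
`(|Tx| ⊓ |Ty|)(r, c) ≤ κ (|x_r| ⊓ |y_{k+c}| + |y_r| ⊓ |x_{k+c}|)`, and splitting
`min(a, b)^q ≤ a^α b^α M^{q-2α}` with `α = pq/(p+q)`, then applying Hölder, bounds the norm of
`|Tx| ⊓ |Ty|` by `2 k^{(p-q)/((p+q)q)} max(‖x‖, ‖y‖)`, which is small for large `k` since `p < q`.

A disjointness preserving `S` sends the `2k` unit vectors to disjointly supported vectors, so by
pigeonhole some `S e_i` vanishes on at least `k/2` points of the line of `e_i`, where `T e_i = κ`.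
Hence `‖(T - S) e_i‖^q ≥ (k/2) κ^q = 1/2`.
-/

open MeasureTheory ENNReal Finset Filter Topology

theorem Real.add_rpow_le_two_rpow_mul {a b t : ℝ} (ha : 0 ≤ a) (hb : 0 ≤ b) (ht : 1 ≤ t) :
    (a + b) ^ t ≤ 2 ^ (t - 1) * (a ^ t + b ^ t) := by
  exact_mod_cast NNReal.rpow_add_le_mul_rpow_add_rpow ⟨a, ha⟩ ⟨b, hb⟩ ht

theorem min_abs_add_le_of_eq_zero_or {a b a' b' : ℝ} (ha : a = 0 ∨ a' = 0)
    (hb : b = 0 ∨ b' = 0) : min |a + b| |a' + b'| ≤ min |a| |b'| + min |a'| |b| := by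
  rcases ha with rfl | rfl <;> rcases hb with rfl | rfl <;> simp

theorem sum_rpow_le_card_rpow_mul {ι : Type*} (s : Finset ι) {u : ι → ℝ} (hu : ∀ i ∈ s, 0 ≤ u i)
    {p α M : ℝ} (hα : 0 < α) (hαp : α ≤ p) (hM : 0 ≤ M) (hsum : ∑ i ∈ s, u i ^ p ≤ M ^ p) :
    ∑ i ∈ s, u i ^ α ≤ (#s : ℝ) ^ (1 - α / p) * M ^ α := by
  have hp : 0 < p := hα.trans_le hαp
  have hpα : 1 ≤ p / α := (one_le_div hα).mpr hαp
  have hpow := Real.rpow_sum_le_const_mul_sum_rpow_of_nonneg s hpα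
    fun i hi => Real.rpow_nonneg (hu i hi) α
  have hinner : ∀ i ∈ s, (u i ^ α) ^ (p / α) = u i ^ p := fun i hi => by
    rw [← Real.rpow_mul (hu i hi), mul_div_cancel₀ _ hα.ne']
  rw [sum_congr rfl hinner] at hpow
  have hS : 0 ≤ ∑ i ∈ s, u i ^ α := sum_nonneg fun i hi => Real.rpow_nonneg (hu i hi) α
  calc ∑ i ∈ s, u i ^ α = ((∑ i ∈ s, u i ^ α) ^ (p / α)) ^ (α / p) := by
        rw [← Real.rpow_mul hS, show p / α * (α / p) = 1 by field_simp, Real.rpow_one]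
    _ ≤ ((#s : ℝ) ^ (p / α - 1) * M ^ p) ^ (α / p) := by
        gcongr
        exact hpow.trans (by gcongr)
    _ = (#s : ℝ) ^ (1 - α / p) * M ^ α := by
        rw [Real.mul_rpow (by positivity) (by positivity), ← Real.rpow_mul (by positivity),
          ← Real.rpow_mul hM]
        congr 2 <;> field_simp

theorem min_rpow_le_mul_rpow {a b M q α : ℝ} (ha : 0 ≤ a) (hb : 0 ≤ b) (haM : a ≤ M)
    (hα : 0 < α) (hαq : 2 * α ≤ q) : min a b ^ q ≤ a ^ α * b ^ α * M ^ (q - 2 * α) := by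
  have hm : 0 ≤ min a b := le_min ha hb
  calc min a b ^ q = min a b ^ α * min a b ^ α * min a b ^ (q - 2 * α) := by
        rw [← Real.rpow_add' hm (by linarith), ← Real.rpow_add' hm (by linarith)]
        ring_nf
    _ ≤ a ^ α * b ^ α * M ^ (q - 2 * α) := by
        gcongr
        · exact min_le_left a b
        · exact min_le_right a b
        · exact (min_le_left a b).trans haM

theorem sum_sum_min_rpow_le {ι κ : Type*} (s : Finset ι) (t : Finset κ) {u : ι → ℝ} {v : κ → ℝ}
    (hu : ∀ i ∈ s, 0 ≤ u i) (hv : ∀ j ∈ t, 0 ≤ v j) {p q α M : ℝ} (hα : 0 < α) (hαp : α ≤ p)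
    (hαq : 2 * α ≤ q) (hM : 0 ≤ M) (hus : ∑ i ∈ s, u i ^ p ≤ M ^ p)
    (hvt : ∑ j ∈ t, v j ^ p ≤ M ^ p) :
    ∑ i ∈ s, ∑ j ∈ t, min (u i) (v j) ^ q
      ≤ (#s : ℝ) ^ (1 - α / p) * (#t : ℝ) ^ (1 - α / p) * M ^ q := by
  have hp : 0 < p := hα.trans_le hαp
  have huM : ∀ i ∈ s, u i ≤ M := fun i hi =>
    (Real.rpow_le_rpow_iff (hu i hi) hM hp).mp <|
      (single_le_sum (fun j hj => Real.rpow_nonneg (hu j hj) p) hi).trans hus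
  calc ∑ i ∈ s, ∑ j ∈ t, min (u i) (v j) ^ q
      ≤ ∑ i ∈ s, ∑ j ∈ t, u i ^ α * v j ^ α * M ^ (q - 2 * α) :=
        sum_le_sum fun i hi => sum_le_sum fun j hj =>
          min_rpow_le_mul_rpow (hu i hi) (hv j hj) (huM i hi) hα hαq
    _ = (∑ i ∈ s, u i ^ α) * (∑ j ∈ t, v j ^ α) * M ^ (q - 2 * α) := by
        rw [sum_mul_sum, sum_mul]
        simp only [sum_mul]
    _ ≤ ((#s : ℝ) ^ (1 - α / p) * M ^ α) * ((#t : ℝ) ^ (1 - α / p) * M ^ α)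
          * M ^ (q - 2 * α) := by
        gcongr
        · exact sum_nonneg fun j hj => Real.rpow_nonneg (hv j hj) α
        · exact sum_rpow_le_card_rpow_mul s hu hα hαp hM hus
        · exact sum_rpow_le_card_rpow_mul t hv hα hαp hM hvt
    _ = (#s : ℝ) ^ (1 - α / p) * (#t : ℝ) ^ (1 - α / p) * M ^ q := by
        rw [mul_mul_mul_comm, mul_assoc, ← Real.rpow_add' hM (by linarith),
          ← Real.rpow_add' hM (by linarith)]
        ring_nf

theorem Finset.exists_card_mul_card_le_of_pairwiseDisjoint {ι β : Type*} [DecidableEq β]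
    {I : Finset ι} (hI : I.Nonempty) {G : Finset β} {Z : ι → Finset β} (hZG : ∀ i ∈ I, Z i ⊆ G)
    (hZ : (I : Set ι).PairwiseDisjoint Z) : ∃ i ∈ I, #I * #(Z i) ≤ #G := by
  refine exists_le_of_sum_le hI ?_
  rw [← mul_sum, ← card_biUnion hZ, sum_const, smul_eq_mul]
  exact Nat.mul_le_mul_left _ (card_le_card (biUnion_subset.mpr hZG))

theorem Real.rpow_neg_inv_rpow {x : ℝ} (hx : 0 ≤ x) {q : ℝ} (hq : q ≠ 0) :
    (x ^ (-q⁻¹)) ^ q = x⁻¹ := by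
  rw [← Real.rpow_mul hx, neg_mul, inv_mul_cancel₀ hq, Real.rpow_neg_one]

namespace CountingLp

section Coordinates

variable {α : Type*} [MeasurableSpace α] {P : ℝ≥0∞}

theorem coeFn_add_apply (f g : Lp ℝ P (Measure.count : Measure α)) (a : α) :
    (f + g : Lp ℝ P Measure.count) a = f a + g a :=
  Measure.ae_count_iff.mp (Lp.coeFn_add f g) a

theorem coeFn_smul_apply (c : ℝ) (f : Lp ℝ P (Measure.count : Measure α)) (a : α) :
    (c • f : Lp ℝ P Measure.count) a = c * f a :=
  Measure.ae_count_iff.mp (Lp.coeFn_smul c f) a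

noncomputable def evalₗ (a : α) : Lp ℝ P (Measure.count : Measure α) →ₗ[ℝ] ℝ where
  toFun f := f a
  map_add' f g := coeFn_add_apply f g a
  map_smul' c f := coeFn_smul_apply c f a

theorem coeFn_sub_apply (f g : Lp ℝ P (Measure.count : Measure α)) (a : α) :
    (f - g : Lp ℝ P Measure.count) a = f a - g a :=
  map_sub (evalₗ a) f g

theorem coeFn_sum_apply {ι : Type*} (s : Finset ι) (f : ι → Lp ℝ P (Measure.count : Measure α))
    (a : α) : (∑ i ∈ s, f i : Lp ℝ P Measure.count) a = ∑ i ∈ s, f i a :=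
  map_sum (evalₗ a) f s

theorem nonneg_iff (f : Lp ℝ P (Measure.count : Measure α)) : 0 ≤ f ↔ ∀ a, 0 ≤ f a := by
  rw [← Lp.coeFn_nonneg]
  exact Measure.ae_count_iff

theorem coeFn_inf_abs_apply (f g : Lp ℝ P (Measure.count : Measure α)) (a : α) :
    (|f| ⊓ |g| : Lp ℝ P Measure.count) a = min |f a| |g a| := by
  rw [Measure.ae_count_iff.mp (Lp.coeFn_inf |f| |g|) a, Pi.inf_apply,
    Measure.ae_count_iff.mp (Lp.coeFn_abs f) a, Measure.ae_count_iff.mp (Lp.coeFn_abs g) a]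

theorem inf_abs_eq_zero_iff (f g : Lp ℝ P (Measure.count : Measure α)) :
    |f| ⊓ |g| = 0 ↔ ∀ a, f a = 0 ∨ g a = 0 := by
  rw [Lp.eq_zero_iff_ae_eq_zero, Filter.EventuallyEq, Measure.ae_count_iff]
  refine forall_congr' fun a => ?_
  rw [coeFn_inf_abs_apply, Pi.zero_apply]
  constructor
  · intro h
    rcases min_choice |f a| |g a| with h' | h' <;> rw [h'] at h <;> simp_all
  · rintro (h | h) <;> simp [h]

variable [MeasurableSingletonClass α]

section Norm

variable [Fact (1 ≤ P)]

theorem ne_zero_of_one_le : P ≠ 0 :=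
  (zero_lt_one.trans_le Fact.out).ne'

theorem one_le_toReal (hP : P ≠ ∞) : 1 ≤ P.toReal := by
  simpa using ENNReal.toReal_mono hP (Fact.out : 1 ≤ P)

theorem toReal_pos_of_ne_top (hP : P ≠ ∞) : 0 < P.toReal :=
  zero_lt_one.trans_le (one_le_toReal hP)

theorem tsum_enorm_rpow_ne_top (hP : P ≠ ∞) (f : Lp ℝ P (Measure.count : Measure α)) :
    ∑' a, ‖f a‖ₑ ^ P.toReal ≠ ∞ := by
  have h := Lp.eLpNorm_ne_top f
  rw [eLpNorm_eq_lintegral_rpow_enorm_toReal ne_zero_of_one_le hP,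
    lintegral_count] at h
  exact (ENNReal.rpow_eq_top_iff_of_pos (one_div_pos.mpr (toReal_pos_of_ne_top hP))).not.mp h

theorem norm_rpow_eq_tsum (hP : P ≠ ∞) (f : Lp ℝ P (Measure.count : Measure α)) :
    ‖f‖ ^ P.toReal = ∑' a, |f a| ^ P.toReal := by
  have hp := toReal_pos_of_ne_top hP
  rw [Lp.norm_def, ENNReal.toReal_rpow,
    eLpNorm_eq_lintegral_rpow_enorm_toReal ne_zero_of_one_le hP,
    lintegral_count, ← ENNReal.rpow_mul, one_div_mul_cancel hp.ne', ENNReal.rpow_one,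
    ENNReal.tsum_toReal_eq fun a => ENNReal.rpow_ne_top_of_nonneg hp.le enorm_ne_top]
  simp [← ENNReal.toReal_rpow, Real.norm_eq_abs]

theorem summable_abs_rpow (hP : P ≠ ∞) (f : Lp ℝ P (Measure.count : Measure α)) :
    Summable fun a => |f a| ^ P.toReal := by
  simpa [← ENNReal.toReal_rpow, Real.norm_eq_abs] using
    ENNReal.summable_toReal (tsum_enorm_rpow_ne_top hP f)

theorem sum_abs_rpow_le_norm_rpow (hP : P ≠ ∞) (f : Lp ℝ P (Measure.count : Measure α))
    (s : Finset α) : ∑ a ∈ s, |f a| ^ P.toReal ≤ ‖f‖ ^ P.toReal := by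
  rw [norm_rpow_eq_tsum hP]
  exact (summable_abs_rpow hP f).sum_le_tsum s fun a _ => by positivity

theorem norm_rpow_eq_sum (hP : P ≠ ∞) (f : Lp ℝ P (Measure.count : Measure α)) {s : Finset α}
    (hs : ∀ a ∉ s, f a = 0) : ‖f‖ ^ P.toReal = ∑ a ∈ s, |f a| ^ P.toReal := by
  rw [norm_rpow_eq_tsum hP, tsum_eq_sum]
  intro a ha
  simp [hs a ha, (toReal_pos_of_ne_top hP).ne']

theorem abs_apply_le_norm (hP : P ≠ ∞) (f : Lp ℝ P (Measure.count : Measure α)) (a : α) :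
    |f a| ≤ ‖f‖ := by
  have h := sum_abs_rpow_le_norm_rpow hP f {a}
  rwa [sum_singleton, Real.rpow_le_rpow_iff (abs_nonneg _) (norm_nonneg _)
    (toReal_pos_of_ne_top hP)] at h

theorem sum_abs_rpow_le_norm_rpow_of_le (hP : P ≠ ∞) (f : Lp ℝ P (Measure.count : Measure α))
    {t : ℝ} (ht : P.toReal ≤ t) (s : Finset α) : ∑ a ∈ s, |f a| ^ t ≤ ‖f‖ ^ t := by
  have hp := toReal_pos_of_ne_top hP
  have hsplit : ∀ x : ℝ, 0 ≤ x → x ^ t = x ^ P.toReal * x ^ (t - P.toReal) := fun x hx => by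
    rw [← Real.rpow_add' hx (by linarith), add_sub_cancel]
  calc ∑ a ∈ s, |f a| ^ t ≤ ∑ a ∈ s, |f a| ^ P.toReal * ‖f‖ ^ (t - P.toReal) := by
        refine sum_le_sum fun a _ => ?_
        rw [hsplit _ (abs_nonneg _)]
        gcongr
        exact abs_apply_le_norm hP f a
    _ ≤ ‖f‖ ^ P.toReal * ‖f‖ ^ (t - P.toReal) := by
        rw [← sum_mul]
        gcongr
        exact sum_abs_rpow_le_norm_rpow hP f s
    _ = ‖f‖ ^ t := (hsplit _ (norm_nonneg f)).symm

noncomputable def evalCLM (hP : P ≠ ∞) (a : α) : Lp ℝ P (Measure.count : Measure α) →L[ℝ] ℝ :=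
  (evalₗ a).mkContinuous 1 fun f => by
    simpa [evalₗ] using abs_apply_le_norm hP f a

@[simp]
theorem evalCLM_apply (hP : P ≠ ∞) (a : α) (f : Lp ℝ P (Measure.count : Measure α)) :
    evalCLM hP a f = f a :=
  rfl

end Norm

variable (P) in
noncomputable def single (a : α) : Lp ℝ P (Measure.count : Measure α) :=
  indicatorConstLp P (measurableSet_singleton a) (by simp) 1

theorem single_apply_self (a : α) : single P a a = 1 := by
  rw [single, Measure.ae_count_iff.mp indicatorConstLp_coeFn a]
  simp

theorem single_apply_of_ne {a b : α} (hba : b ≠ a) : single P a b = 0 := by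
  rw [single, Measure.ae_count_iff.mp indicatorConstLp_coeFn b]
  simp [hba]

theorem norm_single [Fact (1 ≤ P)] (hP : P ≠ ∞) (a : α) : ‖single P a‖ = 1 := by
  rw [single, norm_indicatorConstLp ne_zero_of_one_le hP]
  simp

theorem inf_abs_single_single {a b : α} (hab : a ≠ b) : |single P a| ⊓ |single P b| = 0 := by
  rw [inf_abs_eq_zero_iff]
  intro c
  by_cases hca : c = a
  · exact .inr (single_apply_of_ne (hca ▸ hab))
  · exact .inl (single_apply_of_ne hca)

end Coordinates

section Grid

local notation "ℓ[" P "]" => Lp ℝ P (Measure.count : Measure ℕ)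

def gridPoints (k : ℕ) : Finset ℕ := (range k ×ˢ range k).image fun rc => Nat.pair rc.1 rc.2

theorem sum_gridPoints {M : Type*} [AddCommMonoid M] (k : ℕ) (f : ℕ → M) :
    ∑ t ∈ gridPoints k, f t = ∑ r ∈ range k, ∑ c ∈ range k, f (Nat.pair r c) := by
  rw [gridPoints, sum_image fun a _ b _ h => Prod.ext_iff.mpr (Nat.pair_eq_pair.mp h), sum_product]

theorem card_gridPoints (k : ℕ) : #(gridPoints k) = k * k := by
  rw [card_eq_sum_ones, sum_gridPoints]
  simp

/-- With `κ = k^(-1/q)`, the unit vector `e r` (`r < k`) is sent to `κ` times the indicator of the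
`r`-th row `{Nat.pair r c | c < k}` of the grid, and `e (k + c)` (`c < k`) to `κ` times the
indicator of its `c`-th column. -/
noncomputable def gridOp {P : ℝ≥0∞} [Fact (1 ≤ P)] (hP : P ≠ ∞) (Q : ℝ≥0∞) [Fact (1 ≤ Q)]
    (k : ℕ) : ℓ[P] →L[ℝ] ℓ[Q] :=
  ∑ rc ∈ range k ×ˢ range k,
    ((k : ℝ) ^ (-Q.toReal⁻¹) • (evalCLM hP rc.1 + evalCLM hP (k + rc.2))).smulRight
      (single Q (Nat.pair rc.1 rc.2))

variable {P Q : ℝ≥0∞} [Fact (1 ≤ P)]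

theorem sum_sum_min_abs_rpow_le (hP : P ≠ ∞) {q : ℝ} (hpq : P.toReal ≤ q) (k : ℕ)
    {u v : ℓ[P]} {M : ℝ} (hu : ‖u‖ ≤ M) (hv : ‖v‖ ≤ M) :
    ∑ r ∈ range k, ∑ c ∈ range k, min |u r| |v (k + c)| ^ q
      ≤ (k : ℝ) ^ (2 * P.toReal / (P.toReal + q)) * M ^ q := by
  set p := P.toReal
  have hp : 0 < p := toReal_pos_of_ne_top hP
  have hq : 0 < q := hp.trans_le hpq
  have hM : 0 ≤ M := (norm_nonneg u).trans hu
  have hus : ∑ r ∈ range k, |u r| ^ p ≤ M ^ p :=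
    (sum_abs_rpow_le_norm_rpow hP u _).trans (by gcongr)
  have hvs : ∑ c ∈ range k, |v (k + c)| ^ p ≤ M ^ p := by
    have h := sum_abs_rpow_le_norm_rpow hP v ((range k).map (addLeftEmbedding k))
    rw [sum_map] at h
    exact h.trans (by gcongr)
  -- `α = pq/(p+q)` satisfies `α ≤ p` and `2α ≤ q`, and `α > p/2` when `p < q`, so the
  -- resulting power `k^{2(1 - α/p)}` is `o(k)`
  set α := p * q / (p + q)
  have hα : 0 < α := by positivity
  have hαp : α ≤ p := by
    rw [div_le_iff₀ (by positivity)]; nlinarith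
  have hαq : 2 * α ≤ q := by
    rw [mul_div_assoc', div_le_iff₀ (by positivity)]; nlinarith
  have hexp : 2 * p / (p + q) = (1 - α / p) + (1 - α / p) := by
    simp only [α]
    field_simp
    ring
  have h := sum_sum_min_rpow_le (range k) (range k) (fun _ _ => abs_nonneg (u _))
    (fun _ _ => abs_nonneg (v (k + _))) hα hαp hαq hM hus hvs
  rwa [card_range, ← Real.rpow_add' k.cast_nonneg (by rw [← hexp]; positivity), ← hexp] at h

variable [Fact (1 ≤ Q)] (hP : P ≠ ∞) {k : ℕ}

theorem gridOp_apply (x : ℓ[P]) (t : ℕ) :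
    gridOp hP Q k x t = ∑ rc ∈ range k ×ˢ range k,
      (k : ℝ) ^ (-Q.toReal⁻¹) * (x rc.1 + x (k + rc.2)) * single Q (Nat.pair rc.1 rc.2) t := by
  rw [gridOp, _root_.sum_apply, coeFn_sum_apply]
  refine sum_congr rfl fun rc _ => ?_
  rw [ContinuousLinearMap.smulRight_apply, coeFn_smul_apply]
  simp [mul_add]

theorem gridOp_apply_pair (x : ℓ[P]) {r c : ℕ} (hr : r < k) (hc : c < k) :
    gridOp hP Q k x (Nat.pair r c) = (k : ℝ) ^ (-Q.toReal⁻¹) * (x r + x (k + c)) := by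
  rw [gridOp_apply, sum_eq_single_of_mem (r, c) (by simp [hr, hc]), single_apply_self, mul_one]
  rintro ⟨r', c'⟩ _ hne
  rw [single_apply_of_ne, mul_zero]
  intro h
  exact hne (by simp [Nat.pair_eq_pair.mp h])

theorem gridOp_apply_of_notMem (x : ℓ[P]) {t : ℕ} (ht : t ∉ gridPoints k) :
    gridOp hP Q k x t = 0 := by
  rw [gridOp_apply]
  refine sum_eq_zero fun rc hrc => ?_
  rw [single_apply_of_ne, mul_zero]
  rintro rfl
  exact ht (mem_image_of_mem _ hrc)

theorem gridOp_nonneg {x : ℓ[P]} (hx : 0 ≤ x) : 0 ≤ gridOp hP Q k x := by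
  rw [nonneg_iff] at hx ⊢
  intro t
  rw [gridOp_apply]
  refine sum_nonneg fun rc _ =>
    mul_nonneg (mul_nonneg (by positivity) (add_nonneg (hx _) (hx _))) ?_
  by_cases h : t = Nat.pair rc.1 rc.2
  · rw [h, single_apply_self]; exact zero_le_one
  · rw [single_apply_of_ne h]

theorem finiteDimensional_range_gridOp :
    FiniteDimensional ℝ (LinearMap.range (gridOp hP Q k : ℓ[P] →ₗ[ℝ] ℓ[Q])) := by
  classical
  refine Submodule.finiteDimensional_of_le (S₂ := Submodule.span ℝ
    ((range k ×ˢ range k).image fun rc => single Q (Nat.pair rc.1 rc.2) : Set ℓ[Q])) ?_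
  rintro _ ⟨x, rfl⟩
  rw [ContinuousLinearMap.coe_coe, gridOp, _root_.sum_apply]
  exact Submodule.sum_mem _ fun rc hrc =>
    Submodule.smul_mem _ _ (Submodule.subset_span (mem_image_of_mem _ hrc))

theorem norm_rpow_eq_sum_gridPoints (hQ : Q ≠ ∞) (G : ℓ[Q]) (hG : ∀ t ∉ gridPoints k, G t = 0) :
    ‖G‖ ^ Q.toReal = ∑ r ∈ range k, ∑ c ∈ range k, |G (Nat.pair r c)| ^ Q.toReal :=
  (norm_rpow_eq_sum hQ G hG).trans (sum_gridPoints k _)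

theorem norm_gridOp_apply_rpow (hQ : Q ≠ ∞) (x : ℓ[P]) :
    ‖gridOp hP Q k x‖ ^ Q.toReal
      = ∑ r ∈ range k, ∑ c ∈ range k, (k : ℝ)⁻¹ * |x r + x (k + c)| ^ Q.toReal := by
  rw [norm_rpow_eq_sum_gridPoints hQ _ fun t => gridOp_apply_of_notMem hP x]
  refine sum_congr rfl fun r hr => sum_congr rfl fun c hc => ?_
  rw [gridOp_apply_pair hP x (mem_range.mp hr) (mem_range.mp hc), abs_mul,
    abs_of_nonneg (by positivity), Real.mul_rpow (by positivity) (abs_nonneg _),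
    Real.rpow_neg_inv_rpow k.cast_nonneg (toReal_pos_of_ne_top hQ).ne']

theorem norm_gridOp_apply_le (hQ : Q ≠ ∞) (hpq : P.toReal ≤ Q.toReal) (hk : 0 < k) (x : ℓ[P]) :
    ‖gridOp hP Q k x‖ ≤ 2 ^ (1 - 1 / Q.toReal) * ‖x‖ := by
  set q := Q.toReal
  have hq : 1 ≤ q := one_le_toReal hQ
  have hk' : (0 : ℝ) < k := Nat.cast_pos.mpr hk
  rw [← Real.rpow_le_rpow_iff (norm_nonneg _) (by positivity) (by positivity : 0 < q)]
  calc ‖gridOp hP Q k x‖ ^ q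
      = ∑ r ∈ range k, ∑ c ∈ range k, (k : ℝ)⁻¹ * |x r + x (k + c)| ^ q :=
        norm_gridOp_apply_rpow hP hQ x
    _ ≤ ∑ r ∈ range k, ∑ c ∈ range k,
          (k : ℝ)⁻¹ * (2 ^ (q - 1) * (|x r| ^ q + |x (k + c)| ^ q)) := by
        gcongr with r _ c _
        exact (Real.rpow_le_rpow (abs_nonneg _) (abs_add_le _ _) (by positivity)).trans
          (Real.add_rpow_le_two_rpow_mul (abs_nonneg _) (abs_nonneg _) hq)
    _ = 2 ^ (q - 1) * ∑ i ∈ range (k + k), |x i| ^ q := by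
        simp only [sum_range_add, mul_add, sum_add_distrib, ← mul_sum, sum_const,
          card_range, nsmul_eq_mul]
        field_simp
    _ ≤ 2 ^ (q - 1) * ‖x‖ ^ q := by
        gcongr
        exact sum_abs_rpow_le_norm_rpow_of_le hP x hpq _
    _ = (2 ^ (1 - 1 / q) * ‖x‖) ^ q := by
        rw [Real.mul_rpow (by positivity) (norm_nonneg _), ← Real.rpow_mul zero_le_two]
        rw [sub_mul, one_div_mul_cancel (by positivity), one_mul]

theorem norm_gridOp_le (hQ : Q ≠ ∞) (hpq : P.toReal ≤ Q.toReal) (hk : 0 < k) :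
    ‖gridOp hP Q k‖ ≤ 2 ^ (1 - 1 / Q.toReal) :=
  ContinuousLinearMap.opNorm_le_bound _ (by positivity) (norm_gridOp_apply_le hP hQ hpq hk)

theorem abs_inf_abs_gridOp_apply_pair_rpow_le (hQ : Q ≠ ∞) {x y : ℓ[P]}
    (hxy : ∀ a, x a = 0 ∨ y a = 0) {r c : ℕ} (hr : r < k) (hc : c < k) :
    |(|gridOp hP Q k x| ⊓ |gridOp hP Q k y| : ℓ[Q]) (Nat.pair r c)| ^ Q.toReal
      ≤ (k : ℝ)⁻¹ * (2 ^ (Q.toReal - 1) *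
          (min |x r| |y (k + c)| ^ Q.toReal + min |y r| |x (k + c)| ^ Q.toReal)) := by
  have hκ : (0 : ℝ) ≤ (k : ℝ) ^ (-Q.toReal⁻¹) := by positivity
  rw [coeFn_inf_abs_apply, gridOp_apply_pair hP x hr hc, gridOp_apply_pair hP y hr hc, abs_mul,
    abs_mul, abs_of_nonneg hκ, ← mul_min_of_nonneg _ _ hκ, abs_of_nonneg (by positivity)]
  calc ((k : ℝ) ^ (-Q.toReal⁻¹) * min |x r + x (k + c)| |y r + y (k + c)|) ^ Q.toReal
      ≤ ((k : ℝ) ^ (-Q.toReal⁻¹) * (min |x r| |y (k + c)| + min |y r| |x (k + c)|)) ^ Q.toReal := by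
        gcongr
        exact min_abs_add_le_of_eq_zero_or (hxy r) (hxy (k + c))
    _ ≤ _ := by
        rw [Real.mul_rpow hκ (by positivity),
          Real.rpow_neg_inv_rpow k.cast_nonneg (toReal_pos_of_ne_top hQ).ne']
        gcongr
        exact Real.add_rpow_le_two_rpow_mul (by positivity) (by positivity) (one_le_toReal hQ)

theorem norm_inf_abs_gridOp_le (hQ : Q ≠ ∞) (hpq : P.toReal ≤ Q.toReal) (hk : 0 < k)
    {x y : ℓ[P]} (hxy : |x| ⊓ |y| = 0) :
    ‖(|gridOp hP Q k x| ⊓ |gridOp hP Q k y| : ℓ[Q])‖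
      ≤ 2 * (k : ℝ) ^ ((P.toReal - Q.toReal) / ((P.toReal + Q.toReal) * Q.toReal))
        * max ‖x‖ ‖y‖ := by
  set p := P.toReal
  set q := Q.toReal
  set M := max ‖x‖ ‖y‖
  set D : ℓ[Q] := |gridOp hP Q k x| ⊓ |gridOp hP Q k y|
  have hp : 1 ≤ p := one_le_toReal hP
  have hq : 1 ≤ q := one_le_toReal hQ
  have hk' : (0 : ℝ) < k := Nat.cast_pos.mpr hk
  have hD : ∀ t ∉ gridPoints k, D t = 0 := fun t ht => by
    simp [D, coeFn_inf_abs_apply, gridOp_apply_of_notMem hP _ ht]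
  rw [← Real.rpow_le_rpow_iff (norm_nonneg _) (by positivity) (by positivity : 0 < q)]
  calc ‖D‖ ^ q = ∑ r ∈ range k, ∑ c ∈ range k, |D (Nat.pair r c)| ^ q :=
        norm_rpow_eq_sum_gridPoints hQ D hD
    _ ≤ ∑ r ∈ range k, ∑ c ∈ range k, (k : ℝ)⁻¹ * (2 ^ (q - 1) *
          (min |x r| |y (k + c)| ^ q + min |y r| |x (k + c)| ^ q)) :=
        sum_le_sum fun r hr => sum_le_sum fun c hc =>
          abs_inf_abs_gridOp_apply_pair_rpow_le hP hQ ((inf_abs_eq_zero_iff x y).mp hxy)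
            (mem_range.mp hr) (mem_range.mp hc)
    _ = (k : ℝ)⁻¹ * 2 ^ (q - 1) * (∑ r ∈ range k, ∑ c ∈ range k, min |x r| |y (k + c)| ^ q
          + ∑ r ∈ range k, ∑ c ∈ range k, min |y r| |x (k + c)| ^ q) := by
        simp only [mul_add, sum_add_distrib, ← mul_sum]
        ring
    _ ≤ (k : ℝ)⁻¹ * 2 ^ (q - 1) * ((k : ℝ) ^ (2 * p / (p + q)) * M ^ q
          + (k : ℝ) ^ (2 * p / (p + q)) * M ^ q) := by
        gcongr
        · exact sum_sum_min_abs_rpow_le hP hpq k (le_max_left _ _) (le_max_right _ _)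
        · exact sum_sum_min_abs_rpow_le hP hpq k (le_max_right _ _) (le_max_left _ _)
    _ = (2 * (k : ℝ) ^ ((p - q) / ((p + q) * q)) * M) ^ q := by
        have hk_exp : (k : ℝ)⁻¹ * (k : ℝ) ^ (2 * p / (p + q))
            = (k : ℝ) ^ ((p - q) / ((p + q) * q) * q) := by
          rw [← Real.rpow_neg_one, ← Real.rpow_add hk']
          congr 1
          field_simp
          ring
        rw [Real.mul_rpow (by positivity) (by positivity),
          Real.mul_rpow (by positivity) (by positivity), ← Real.rpow_mul hk'.le, ← hk_exp,
          Real.rpow_sub_one two_ne_zero]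
        ring

def gridLine (k i : ℕ) : Finset ℕ :=
  if i < k then (range k).image (Nat.pair i) else (range k).image fun r => Nat.pair r (i - k)

theorem card_gridLine (k i : ℕ) : #(gridLine k i) = k := by
  unfold gridLine
  split_ifs
  · rw [card_image_of_injective _ fun a b h => (Nat.pair_eq_pair.mp h).2, card_range]
  · rw [card_image_of_injective _ fun a b h => (Nat.pair_eq_pair.mp h).1, card_range]

theorem gridLine_subset {i : ℕ} (hi : i < 2 * k) : gridLine k i ⊆ gridPoints k := by
  intro t ht
  unfold gridLine at ht
  split_ifs at ht with h
  · obtain ⟨c, hc, rfl⟩ := mem_image.mp ht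
    exact mem_image.mpr ⟨(i, c), by simp [h, mem_range.mp hc], rfl⟩
  · obtain ⟨r, hr, rfl⟩ := mem_image.mp ht
    exact mem_image.mpr ⟨(r, i - k), mem_product.mpr ⟨hr, mem_range.mpr (by omega)⟩, rfl⟩

theorem gridOp_single_apply_of_mem_gridLine {i t : ℕ} (hi : i < 2 * k) (ht : t ∈ gridLine k i) :
    gridOp hP Q k (single P i) t = (k : ℝ) ^ (-Q.toReal⁻¹) := by
  unfold gridLine at ht
  split_ifs at ht with h
  · obtain ⟨c, hc, rfl⟩ := mem_image.mp ht
    rw [gridOp_apply_pair hP _ h (mem_range.mp hc), single_apply_self,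
      single_apply_of_ne (by omega), add_zero, mul_one]
  · obtain ⟨r, hr, rfl⟩ := mem_image.mp ht
    rw [mem_range] at hr
    rw [gridOp_apply_pair hP _ hr (by omega), single_apply_of_ne (by omega),
      Nat.add_sub_cancel' (not_lt.mp h), single_apply_self, zero_add, mul_one]

theorem exists_two_mul_card_support_le (hk : 0 < k) (S : ℓ[P] →L[ℝ] ℓ[Q])
    (hS : ∀ x y, |x| ⊓ |y| = 0 → |S x| ⊓ |S y| = 0) :
    ∃ i < 2 * k, 2 * #((gridPoints k).filter fun t => S (single P i) t ≠ 0) ≤ k := by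
  set Z : ℕ → Finset ℕ := fun i => (gridPoints k).filter fun t => S (single P i) t ≠ 0
  have hZ : ((range (2 * k) : Finset ℕ) : Set ℕ).PairwiseDisjoint Z := by
    intro i _ j _ hij
    refine disjoint_filter.mpr fun t _ hi hj => ?_
    rcases (inf_abs_eq_zero_iff _ _).mp (hS _ _ (inf_abs_single_single hij)) t with h | h
    exacts [hi h, hj h]
  obtain ⟨i, hi, hZi⟩ : ∃ i ∈ range (2 * k), #(range (2 * k)) * #(Z i) ≤ #(gridPoints k) :=
    exists_card_mul_card_le_of_pairwiseDisjoint (nonempty_range_iff.mpr (by omega))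
      (fun i _ => filter_subset _ _) hZ
  rw [card_range, card_gridPoints, mul_assoc] at hZi
  exact ⟨i, mem_range.mp hi, Nat.le_of_mul_le_mul_left (by linarith) hk⟩

theorem two_rpow_neg_le_norm_gridOp_sub (hQ : Q ≠ ∞) (hk : 0 < k) (S : ℓ[P] →L[ℝ] ℓ[Q])
    (hS : ∀ x y, |x| ⊓ |y| = 0 → |S x| ⊓ |S y| = 0) :
    (2 : ℝ) ^ (-1 / Q.toReal) ≤ ‖gridOp hP Q k - S‖ := by
  set q := Q.toReal
  have hq : 0 < q := toReal_pos_of_ne_top hQ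
  have hk' : (0 : ℝ) < k := Nat.cast_pos.mpr hk
  obtain ⟨i, hi, hZk⟩ := exists_two_mul_card_support_le hk S hS
  set Z := (gridPoints k).filter fun t => S (single P i) t ≠ 0
  set W := gridLine k i \ Z
  have hW : (k : ℝ) ≤ 2 * #W := by
    have hsdiff : k - #Z ≤ #W := card_gridLine k i ▸ le_card_sdiff Z (gridLine k i)
    exact_mod_cast (by omega : k ≤ 2 * #W)
  have hFW : ∀ t ∈ W, |(gridOp hP Q k - S) (single P i) t| ^ q = (k : ℝ)⁻¹ := by
    intro t ht
    obtain ⟨htL, htZ⟩ := mem_sdiff.mp ht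
    have hSt : S (single P i) t = 0 := by
      by_contra h
      exact htZ (mem_filter.mpr ⟨gridLine_subset hi htL, h⟩)
    rw [_root_.sub_apply, coeFn_sub_apply, hSt, sub_zero,
      gridOp_single_apply_of_mem_gridLine hP hi htL, abs_of_nonneg (by positivity),
      Real.rpow_neg_inv_rpow hk'.le hq.ne']
  have hF : 2⁻¹ ≤ ‖(gridOp hP Q k - S) (single P i)‖ ^ q :=
    calc (2 : ℝ)⁻¹ ≤ #W * (k : ℝ)⁻¹ := by
          rw [← div_eq_mul_inv, le_div_iff₀ hk']
          linarith
      _ = ∑ t ∈ W, |(gridOp hP Q k - S) (single P i) t| ^ q := by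
          rw [sum_congr rfl hFW, sum_const, nsmul_eq_mul]
      _ ≤ ‖(gridOp hP Q k - S) (single P i)‖ ^ q := sum_abs_rpow_le_norm_rpow hQ _ W
  calc (2 : ℝ) ^ (-1 / q) ≤ ‖(gridOp hP Q k - S) (single P i)‖ := by
        rw [← Real.rpow_le_rpow_iff (by positivity) (norm_nonneg _) hq, ← Real.rpow_mul zero_le_two,
          div_mul_cancel₀ _ hq.ne', Real.rpow_neg_one]
        exact hF
    _ ≤ ‖gridOp hP Q k - S‖ := by
        simpa [norm_single hP] using (gridOp hP Q k - S).le_opNorm (single P i)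

end Grid

end CountingLp

theorem exists_pos_nat_rpow_le {γ : ℝ} (hγ : γ < 0) {ε : ℝ} (hε : 0 < ε) :
    ∃ k : ℕ, 0 < k ∧ (k : ℝ) ^ γ ≤ ε := by
  have h : Tendsto (fun k : ℕ => (k : ℝ) ^ γ) atTop (𝓝 0) := by
    have h := tendsto_rpow_neg_atTop (neg_pos.mpr hγ)
    rw [neg_neg] at h
    exact h.comp tendsto_natCast_atTop_atTop
  obtain ⟨k, hkε, hk⟩ := ((h.eventually (gt_mem_nhds hε)).and (eventually_gt_atTop 0)).exists
  exact ⟨k, hk, hkε.le⟩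

open CountingLp in
/-- For `1 ≤ p < q < ∞` and every `ε > 0` there is a finite rank positive
`ε`-disjointness preserving operator `T : ℓ_p → ℓ_q` with `‖T‖ ≤ 2^{1-1/q}` such that
`‖T - S‖ ≥ 2^{-1/q}` for every disjointness preserving `S`.  Here `ℓ_r` is realized as `L_r`
of counting measure on `ℕ`. -/
theorem stmt13 (p q : ℝ) (hp : 1 ≤ p) (hpq : p < q)
    [Fact (1 ≤ ENNReal.ofReal p)] [Fact (1 ≤ ENNReal.ofReal q)]
    (ε : ℝ) (hε : 0 < ε) :
    ∃ T : Lp ℝ (ENNReal.ofReal p) (Measure.count : Measure ℕ) →L[ℝ]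
        Lp ℝ (ENNReal.ofReal q) (Measure.count : Measure ℕ),
      FiniteDimensional ℝ (LinearMap.range (T : Lp ℝ (ENNReal.ofReal p)
        (Measure.count : Measure ℕ) →ₗ[ℝ] Lp ℝ (ENNReal.ofReal q) (Measure.count : Measure ℕ))) ∧
      (∀ x, 0 ≤ x → 0 ≤ T x) ∧
      (∀ x y, |x| ⊓ |y| = 0 → ‖|T x| ⊓ |T y|‖ ≤ ε * max ‖x‖ ‖y‖) ∧
      ‖T‖ ≤ (2 : ℝ) ^ (1 - 1 / q) ∧
      (∀ S : Lp ℝ (ENNReal.ofReal p) (Measure.count : Measure ℕ) →L[ℝ]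
          Lp ℝ (ENNReal.ofReal q) (Measure.count : Measure ℕ),
        (∀ x y, |x| ⊓ |y| = 0 → |S x| ⊓ |S y| = 0) →
        (2 : ℝ) ^ (-(1 : ℝ) / q) ≤ ‖T - S‖) := by
  have hp' : (ENNReal.ofReal p).toReal = p := ENNReal.toReal_ofReal (by linarith)
  have hq' : (ENNReal.ofReal q).toReal = q := ENNReal.toReal_ofReal (by linarith)
  have hpq' : (ENNReal.ofReal p).toReal ≤ (ENNReal.ofReal q).toReal := by
    rw [hp', hq']
    exact hpq.le
  have hP : ENNReal.ofReal p ≠ ∞ := ENNReal.ofReal_ne_top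
  have hQ : ENNReal.ofReal q ≠ ∞ := ENNReal.ofReal_ne_top
  obtain ⟨k, hk, hkε⟩ := exists_pos_nat_rpow_le (γ := (p - q) / ((p + q) * q))
    (div_neg_of_neg_of_pos (by linarith) (mul_pos (by linarith) (by linarith))) (half_pos hε)
  refine ⟨gridOp hP _ k, finiteDimensional_range_gridOp hP, fun x hx => gridOp_nonneg hP hx,
    fun x y hxy => ?_, by simpa only [hq'] using norm_gridOp_le hP hQ hpq' hk,
    fun S hS => by simpa only [hq'] using two_rpow_neg_le_norm_gridOp_sub hP hQ hk S hS⟩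
  calc _ ≤ 2 * (k : ℝ) ^ ((p - q) / ((p + q) * q)) * max ‖x‖ ‖y‖ := by
        simpa only [hp', hq'] using norm_inf_abs_gridOp_le hP hQ hpq' hk hxy
    _ ≤ ε * max ‖x‖ ‖y‖ := by
        gcongr
        linarith
end

section
/- Let E and F be real Banach lattices, ε ≥ 0, and T : E → F a bounded linear operator. Then: (1) if T is positive, then T is ε-minimum preserving if and only if T is ε-disjointness preserving; (2) if T is ε-disjointness preserving, then T is a 2ε-lattice homomorphism; (3) if T is an ε-lattice homomorphism, then T is 4ε-disjointness preserving, and if moreover T is positive, then T is ε-disjointness preserving. -/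
/-!
Everything rests on the Riesz-space identity `||a + b| - |a - b|| = 2 • (|a| ⊓ |b|)`.
With `a = T x⁺`, `b = T x⁻` it identifies the lattice-homomorphism defect `|T |x|| - |T x|` with
twice the overlap of the images of the disjoint vectors `x⁺`, `x⁻`; conversely, for disjoint `x`, `y`
one has `|x + y| = |x - y|`, so twice `|T x| ⊓ |T y|` is a difference of two such defects.
For positive `T`, the minimum defect `T x ⊓ T y - T (x ⊓ y)` is the overlap of the images of the
disjoint vectors `x - x ⊓ y` and `y - x ⊓ y`, and rescaling into the unit ball gives the converse.
-/

section LatticeOrderedGroup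

variable {α : Type*} [Lattice α] [AddCommGroup α] [IsOrderedAddMonoid α]

theorem two_nsmul_sup (a b : α) : 2 • (a ⊔ b) = 2 • a ⊔ 2 • b := by
  rw [two_nsmul_sup_eq_add_add_abs_sub, abs, add_sup, sup_comm, two_nsmul, two_nsmul]
  congr 1 <;> abel

theorem abs_two_nsmul (a : α) : |2 • a| = 2 • |a| := by
  rw [abs, abs, two_nsmul_sup, smul_neg]

theorem abs_add_sup_abs_sub (a b : α) : |a + b| ⊔ |a - b| = |a| + |b| := by
  simp only [abs, add_sup, sup_add, neg_add, neg_neg, sub_eq_add_neg]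
  ac_rfl

theorem abs_add_add_abs_sub (a b : α) : |a + b| + |a - b| = 2 • (|a| ⊔ |b|) := by
  have h := abs_add_sup_abs_sub (a + b) (a - b)
  rwa [add_add_sub_cancel, add_sub_sub_cancel, ← two_nsmul, ← two_nsmul, abs_two_nsmul,
    abs_two_nsmul, ← two_nsmul_sup, eq_comm] at h

theorem abs_abs_add_sub_abs_sub (a b : α) : |(|a + b| - |a - b|)| = 2 • (|a| ⊓ |b|) := by
  have h := two_nsmul_sup_eq_add_add_abs_sub |a + b| |a - b|
  rw [abs_add_sup_abs_sub, abs_add_add_abs_sub, abs_sub_comm] at h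
  rw [← add_right_cancel_iff (a := 2 • (|a| ⊔ |b|)), ← nsmul_add, inf_add_sup, h, add_comm]

theorem abs_add_eq_abs_sub_of_inf_eq_zero {a b : α} (h : |a| ⊓ |b| = 0) : |a + b| = |a - b| := by
  have h0 := abs_abs_add_sub_abs_sub a b
  rw [h, smul_zero] at h0
  exact sub_eq_zero.1 (le_antisymm (h0 ▸ le_abs_self _) (neg_nonpos.1 (h0 ▸ neg_le_abs _)))

theorem abs_sub_eq_abs_add_abs_of_inf_eq_zero {a b : α} (h : |a| ⊓ |b| = 0) :
    |a - b| = |a| + |b| := by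
  rw [← abs_add_sup_abs_sub, abs_add_eq_abs_sub_of_inf_eq_zero h, sup_idem]

end LatticeOrderedGroup

section PositiveScalars

variable {α : Type*} [Lattice α] [AddCommGroup α] [IsOrderedAddMonoid α] [Module ℝ α]

theorem dyadic_smul_nonneg {a : α} (ha : 0 ≤ a) (k m : ℕ) : 0 ≤ ((m : ℝ) / 2 ^ k) • a := by
  induction k generalizing m with
  | zero => simpa [Nat.cast_smul_eq_nsmul] using nsmul_nonneg ha m
  | succ k ih =>
    refine nsmul_two_semiclosed ?_
    rw [← Nat.cast_smul_eq_nsmul ℝ, smul_smul]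
    convert ih m using 2
    push_cast
    ring

variable [TopologicalSpace α] [ClosedIciTopology α] [ContinuousSMul ℝ α]

-- The dyadic multiples of `a` are nonnegative, and they approximate `c • a`.
theorem smul_nonneg_of_closedIci {c : ℝ} (hc : 0 ≤ c) {a : α} (ha : 0 ≤ a) : 0 ≤ c • a := by
  have hlim : Filter.Tendsto (fun n : ℕ ↦ ((⌊c * 2 ^ n⌋₊ : ℝ) / 2 ^ n) • a) Filter.atTop
      (nhds (c • a)) :=
    ((tendsto_nat_floor_mul_div_atTop hc).comp
      (tendsto_pow_atTop_atTop_of_one_lt one_lt_two)).smul_const a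
  exact isClosed_Ici.mem_of_tendsto hlim (.of_forall fun n ↦ dyadic_smul_nonneg ha n _)

instance ClosedIciTopology.toPosSMulMono : PosSMulMono ℝ α :=
  .of_smul_nonneg fun _ hc _ ha ↦ smul_nonneg_of_closedIci hc ha

theorem smul_inf_of_pos {c : ℝ} (hc : 0 < c) (a b : α) : c • (a ⊓ b) = c • a ⊓ c • b :=
  (OrderIso.smulRight hc).map_inf a b

end PositiveScalars

theorem norm_two_nsmul {β : Type*} [SeminormedAddCommGroup β] [NormedSpace ℝ β] (a : β) :
    ‖2 • a‖ = 2 * ‖a‖ := by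
  rw [← Nat.cast_smul_eq_nsmul ℝ, norm_smul, Nat.cast_ofNat, Real.norm_ofNat]

section SolidNorm

variable {α : Type*} [NormedAddCommGroup α] [Lattice α] [HasSolidNorm α] [IsOrderedAddMonoid α]

theorem norm_le_norm_of_nonneg_of_le {a b : α} (ha : 0 ≤ a) (hab : a ≤ b) : ‖a‖ ≤ ‖b‖ :=
  norm_le_norm_of_abs_le_abs (by rwa [abs_of_nonneg ha, abs_of_nonneg (ha.trans hab)])

theorem norm_posPart_le (a : α) : ‖a⁺‖ ≤ ‖a‖ :=
  norm_abs_eq_norm a ▸ norm_le_norm_of_nonneg_of_le (posPart_nonneg a)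
    (posPart_add_negPart a ▸ le_add_of_nonneg_right (negPart_nonneg a))

theorem norm_negPart_le (a : α) : ‖a⁻‖ ≤ ‖a‖ :=
  norm_abs_eq_norm a ▸ norm_le_norm_of_nonneg_of_le (negPart_nonneg a)
    (posPart_add_negPart a ▸ le_add_of_nonneg_left (posPart_nonneg a))

theorem norm_inf_abs_le_norm_inf {a b c d : α} (hac : |a| ≤ c) (hbd : |b| ≤ d) :
    ‖|a| ⊓ |b|‖ ≤ ‖c ⊓ d‖ :=
  norm_le_norm_of_nonneg_of_le (le_inf (abs_nonneg a) (abs_nonneg b)) (inf_le_inf hac hbd)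

theorem norm_abs_add_abs_le_two_mul_max (a b : α) : ‖|a| + |b|‖ ≤ 2 * max ‖a‖ ‖b‖ := by
  have := norm_add_le |a| |b|
  rw [norm_abs_eq_norm, norm_abs_eq_norm] at this
  linarith [le_max_left ‖a‖ ‖b‖, le_max_right ‖a‖ ‖b‖]

end SolidNorm

namespace ContinuousLinearMap

variable {E F : Type*} [NormedAddCommGroup E] [Lattice E] [NormedSpace ℝ E]
  [NormedAddCommGroup F] [Lattice F] [NormedSpace ℝ F]

def IsAlmostDisjointnessPreserving (ε : ℝ) (T : E →L[ℝ] F) : Prop :=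
  ∀ x y : E, |x| ⊓ |y| = 0 → ‖|T x| ⊓ |T y|‖ ≤ ε * max ‖x‖ ‖y‖

def IsAlmostMinPreserving (ε : ℝ) (T : E →L[ℝ] F) : Prop :=
  ∀ x y : E, 0 ≤ x → 0 ≤ y → ‖x‖ ≤ 1 → ‖y‖ ≤ 1 → ‖T x ⊓ T y - T (x ⊓ y)‖ ≤ ε

def IsAlmostLatticeHom (ε : ℝ) (T : E →L[ℝ] F) : Prop :=
  ∀ x : E, ‖|T (|x|)| - |T x|‖ ≤ ε * ‖x‖

variable {ε : ℝ} {T : E →L[ℝ] F}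

theorem IsAlmostDisjointnessPreserving.mono {δ : ℝ} (h : IsAlmostDisjointnessPreserving ε T)
    (hεδ : ε ≤ δ) : IsAlmostDisjointnessPreserving δ T := fun x y hxy ↦
  (h x y hxy).trans (mul_le_mul_of_nonneg_right hεδ ((norm_nonneg x).trans (le_max_left _ _)))

variable [IsOrderedAddMonoid E] [IsOrderedAddMonoid F]

theorem abs_apply_le_apply_abs (hT : ∀ x, 0 ≤ x → 0 ≤ T x) (x : E) : |T x| ≤ T |x| := by
  refine abs_le'.2 ⟨?_, ?_⟩
  · simpa using hT _ (sub_nonneg.2 (le_abs_self x))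
  · simpa [neg_le_iff_add_nonneg'] using hT _ (neg_le_iff_add_nonneg'.1 (neg_le_abs x))

variable [HasSolidNorm E]

theorem IsAlmostDisjointnessPreserving.isAlmostMinPreserving (hT : ∀ x, 0 ≤ x → 0 ≤ T x)
    (hε : 0 ≤ ε) (h : IsAlmostDisjointnessPreserving ε T) : IsAlmostMinPreserving ε T := by
  intro x y hx hy hx1 hy1
  have hu : 0 ≤ x - x ⊓ y := sub_nonneg.2 inf_le_left
  have hv : 0 ≤ y - x ⊓ y := sub_nonneg.2 inf_le_right
  have hdisj : |x - x ⊓ y| ⊓ |y - x ⊓ y| = 0 := by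
    rw [abs_of_nonneg hu, abs_of_nonneg hv, ← inf_sub, sub_self]
  have hm : 0 ≤ x ⊓ y := le_inf hx hy
  calc ‖T x ⊓ T y - T (x ⊓ y)‖ = ‖|T (x - x ⊓ y)| ⊓ |T (y - x ⊓ y)|‖ := by
        rw [abs_of_nonneg (hT _ hu), abs_of_nonneg (hT _ hv), map_sub, map_sub, inf_sub]
    _ ≤ ε * max ‖x - x ⊓ y‖ ‖y - x ⊓ y‖ := h _ _ hdisj
    _ ≤ ε * 1 := by
        gcongr
        exact max_le ((norm_le_norm_of_nonneg_of_le hu (sub_le_self x hm)).trans hx1)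
          ((norm_le_norm_of_nonneg_of_le hv (sub_le_self y hm)).trans hy1)
    _ = ε := mul_one ε

variable [HasSolidNorm F]

theorem IsAlmostMinPreserving.isAlmostDisjointnessPreserving (hT : ∀ x, 0 ≤ x → 0 ≤ T x)
    (h : IsAlmostMinPreserving ε T) : IsAlmostDisjointnessPreserving ε T := by
  intro x y hxy
  set M := max ‖x‖ ‖y‖
  rcases ((norm_nonneg x).trans (le_max_left _ _) : 0 ≤ M).eq_or_lt with hM | hM
  · have hx : x = 0 := norm_eq_zero.1 (le_antisymm (hM ▸ le_max_left _ _) (norm_nonneg x))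
    have hy : y = 0 := norm_eq_zero.1 (le_antisymm (hM ▸ le_max_right _ _) (norm_nonneg y))
    simp [hx, hy, ← hM]
  have hball (z : E) (hz : ‖z‖ ≤ M) : ‖M⁻¹ • |z|‖ ≤ 1 := by
    rw [norm_smul, norm_abs_eq_norm, norm_inv, Real.norm_of_nonneg hM.le]
    exact inv_mul_le_one_of_le₀ hz hM.le
  have key := h _ _ (smul_nonneg (inv_nonneg.2 hM.le) (abs_nonneg x))
    (smul_nonneg (inv_nonneg.2 hM.le) (abs_nonneg y)) (hball x (le_max_left _ _))
    (hball y (le_max_right _ _))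
  rw [← smul_inf_of_pos (inv_pos.2 hM), hxy, smul_zero, map_zero, sub_zero, map_smul, map_smul,
    ← smul_inf_of_pos (inv_pos.2 hM), norm_smul, norm_inv, Real.norm_of_nonneg hM.le,
    inv_mul_le_iff₀ hM, mul_comm] at key
  exact (norm_inf_abs_le_norm_inf (abs_apply_le_apply_abs hT x)
    (abs_apply_le_apply_abs hT y)).trans key

theorem IsAlmostDisjointnessPreserving.isAlmostLatticeHom (hε : 0 ≤ ε)
    (h : IsAlmostDisjointnessPreserving ε T) : IsAlmostLatticeHom (2 * ε) T := by
  intro x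
  have hdisj : |x⁺| ⊓ |x⁻| = 0 := by
    rw [abs_of_nonneg (posPart_nonneg x), abs_of_nonneg (negPart_nonneg x),
      posPart_inf_negPart_eq_zero]
  calc ‖|T (|x|)| - |T x|‖ = ‖2 • (|T x⁺| ⊓ |T x⁻|)‖ := by
        rw [← abs_abs_add_sub_abs_sub, ← map_add, ← map_sub, posPart_add_negPart,
          posPart_sub_negPart, norm_abs_eq_norm]
    _ = 2 * ‖|T x⁺| ⊓ |T x⁻|‖ := norm_two_nsmul _
    _ ≤ 2 * (ε * max ‖x⁺‖ ‖x⁻‖) := by gcongr; exact h _ _ hdisj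
    _ ≤ 2 * ε * ‖x‖ := by
        rw [mul_assoc]; gcongr; exact max_le (norm_posPart_le x) (norm_negPart_le x)

theorem IsAlmostLatticeHom.isAlmostDisjointnessPreserving_two_mul (hε : 0 ≤ ε)
    (h : IsAlmostLatticeHom ε T) : IsAlmostDisjointnessPreserving (2 * ε) T := by
  intro x y hxy
  have habs := abs_add_eq_abs_sub_of_inf_eq_zero hxy
  have hsplit : |T (x + y)| - |T (x - y)| =
      (|T (x + y)| - |T (|x + y|)|) + (|T (|x - y|)| - |T (x - y)|) := by
    rw [habs]; abel
  have key : 2 * ‖|T x| ⊓ |T y|‖ ≤ 2 * (ε * ‖|x| + |y|‖) :=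
    calc 2 * ‖|T x| ⊓ |T y|‖ = ‖|T (x + y)| - |T (x - y)|‖ := by
          rw [← norm_two_nsmul, ← abs_abs_add_sub_abs_sub, norm_abs_eq_norm, map_add, map_sub]
      _ ≤ ‖|T (x + y)| - |T (|x + y|)|‖ + ‖|T (|x - y|)| - |T (x - y)|‖ :=
          hsplit ▸ norm_add_le _ _
      _ ≤ ε * ‖x + y‖ + ε * ‖x - y‖ := add_le_add (by rw [norm_sub_rev]; exact h _) (h _)
      _ = 2 * (ε * ‖|x| + |y|‖) := by
          rw [← norm_abs_eq_norm (x + y), ← norm_abs_eq_norm (x - y), habs,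
            abs_sub_eq_abs_add_abs_of_inf_eq_zero hxy]
          ring
  calc ‖|T x| ⊓ |T y|‖ ≤ ε * ‖|x| + |y|‖ := by linarith
    _ ≤ ε * (2 * max ‖x‖ ‖y‖) := by gcongr; exact norm_abs_add_abs_le_two_mul_max x y
    _ = 2 * ε * max ‖x‖ ‖y‖ := by ring

-- For positive `T`, `2 (T |x| ⊓ T |y|) = |T |z|| - |T z|` with `z = |x| - |y|`.
theorem IsAlmostLatticeHom.isAlmostDisjointnessPreserving (hT : ∀ x, 0 ≤ x → 0 ≤ T x)
    (hε : 0 ≤ ε) (h : IsAlmostLatticeHom ε T) : IsAlmostDisjointnessPreserving ε T := by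
  intro x y hxy
  have hz : |(|x| - |y|)| = |x| + |y| := by
    rw [abs_sub_eq_abs_add_abs_of_inf_eq_zero (by rwa [abs_abs, abs_abs]), abs_abs, abs_abs]
  have key : 2 * ‖T |x| ⊓ T |y|‖ ≤ 2 * (ε * ‖|x| + |y|‖ / 2) :=
    calc 2 * ‖T |x| ⊓ T |y|‖ = ‖|T (|(|x| - |y|)|)| - |T (|x| - |y|)|‖ := by
          rw [← norm_two_nsmul, two_nsmul_inf_eq_add_sub_abs_sub, abs_sub_comm, ← map_sub,
            ← map_add, ← hz, abs_of_nonneg (hT _ (abs_nonneg _))]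
      _ ≤ ε * ‖|x| + |y|‖ := by rw [← hz, norm_abs_eq_norm]; exact h _
      _ = 2 * (ε * ‖|x| + |y|‖ / 2) := by ring
  calc ‖|T x| ⊓ |T y|‖ ≤ ‖T |x| ⊓ T |y|‖ :=
        norm_inf_abs_le_norm_inf (abs_apply_le_apply_abs hT x) (abs_apply_le_apply_abs hT y)
    _ ≤ ε * ‖|x| + |y|‖ / 2 := by linarith
    _ ≤ ε * (2 * max ‖x‖ ‖y‖) / 2 := by gcongr; exact norm_abs_add_abs_le_two_mul_max x y
    _ = ε * max ‖x‖ ‖y‖ := by ring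

end ContinuousLinearMap

theorem stmt17_general (E F : Type*)
    [NormedAddCommGroup E] [Lattice E] [HasSolidNorm E] [IsOrderedAddMonoid E] [NormedSpace ℝ E]
    [NormedAddCommGroup F] [Lattice F] [HasSolidNorm F] [IsOrderedAddMonoid F] [NormedSpace ℝ F]
    (ε : ℝ) (hε : 0 ≤ ε) (T : E →L[ℝ] F) :
    ((∀ x : E, 0 ≤ x → 0 ≤ T x) →
      ((∀ x y : E, 0 ≤ x → 0 ≤ y → ‖x‖ ≤ 1 → ‖y‖ ≤ 1 → ‖T x ⊓ T y - T (x ⊓ y)‖ ≤ ε) ↔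
        (∀ x y : E, |x| ⊓ |y| = 0 → ‖|T x| ⊓ |T y|‖ ≤ ε * max ‖x‖ ‖y‖))) ∧
    ((∀ x y : E, |x| ⊓ |y| = 0 → ‖|T x| ⊓ |T y|‖ ≤ ε * max ‖x‖ ‖y‖) →
      (∀ x : E, ‖|T (|x|)| - |T x|‖ ≤ 2 * ε * ‖x‖)) ∧
    ((∀ x : E, ‖|T (|x|)| - |T x|‖ ≤ ε * ‖x‖) →
      ((∀ x y : E, |x| ⊓ |y| = 0 → ‖|T x| ⊓ |T y|‖ ≤ 4 * ε * max ‖x‖ ‖y‖) ∧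
        ((∀ x : E, 0 ≤ x → 0 ≤ T x) →
          ∀ x y : E, |x| ⊓ |y| = 0 → ‖|T x| ⊓ |T y|‖ ≤ ε * max ‖x‖ ‖y‖))) := by
  open ContinuousLinearMap in
  exact ⟨fun hT ↦ ⟨IsAlmostMinPreserving.isAlmostDisjointnessPreserving hT,
      IsAlmostDisjointnessPreserving.isAlmostMinPreserving hT hε⟩,
    IsAlmostDisjointnessPreserving.isAlmostLatticeHom hε,
    fun hLH ↦ ⟨(IsAlmostLatticeHom.isAlmostDisjointnessPreserving_two_mul hε hLH).mono
        (by linarith),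
      fun hT ↦ IsAlmostLatticeHom.isAlmostDisjointnessPreserving hT hε hLH⟩⟩

/-- Relations between `ε`-disjointness preserving (ε-DP), `ε`-minimum
preserving (ε-MP) and `ε`-lattice homomorphism (ε-LH) operators:
(1) a positive operator is ε-MP iff it is ε-DP;
(2) an ε-DP operator is a 2ε-LH;
(3) an ε-LH operator is 4ε-DP, and ε-DP if moreover it is positive. -/
theorem stmt17 (E F : Type*)
    [NormedAddCommGroup E] [Lattice E] [HasSolidNorm E] [IsOrderedAddMonoid E] [NormedSpace ℝ E] [CompleteSpace E]
    [NormedAddCommGroup F] [Lattice F] [HasSolidNorm F] [IsOrderedAddMonoid F] [NormedSpace ℝ F] [CompleteSpace F]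
    (ε : ℝ) (hε : 0 ≤ ε) (T : E →L[ℝ] F) :
    ((∀ x : E, 0 ≤ x → 0 ≤ T x) →
      ((∀ x y : E, 0 ≤ x → 0 ≤ y → ‖x‖ ≤ 1 → ‖y‖ ≤ 1 → ‖T x ⊓ T y - T (x ⊓ y)‖ ≤ ε) ↔
        (∀ x y : E, |x| ⊓ |y| = 0 → ‖|T x| ⊓ |T y|‖ ≤ ε * max ‖x‖ ‖y‖))) ∧
    ((∀ x y : E, |x| ⊓ |y| = 0 → ‖|T x| ⊓ |T y|‖ ≤ ε * max ‖x‖ ‖y‖) →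
      (∀ x : E, ‖|T (|x|)| - |T x|‖ ≤ 2 * ε * ‖x‖)) ∧
    ((∀ x : E, ‖|T (|x|)| - |T x|‖ ≤ ε * ‖x‖) →
      ((∀ x y : E, |x| ⊓ |y| = 0 → ‖|T x| ⊓ |T y|‖ ≤ 4 * ε * max ‖x‖ ‖y‖) ∧
        ((∀ x : E, 0 ≤ x → 0 ≤ T x) →
          ∀ x y : E, |x| ⊓ |y| = 0 → ‖|T x| ⊓ |T y|‖ ≤ ε * max ‖x‖ ‖y‖))) :=
  stmt17_general E F ε hε T
end
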